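/- arXiv:1906.11817 — 2 statements merged into one kernel-verified Lean document; each statement's English description precedes it below -/
import Mathlib

section
/- Let A be a Frobenius algebra with Frobenius isomorphism φ : A ≅ A* of left A-modules. Then there exists an algebra automorphism σ of A such that φ is an isomorphism of (A,A)-bimodules from A to (A*)_σ, where (A*)_σ denotes A* with right action twisted by σ. -/
/-!
Put `ε := φ 1`. Left linearity of `φ` gives `φ x y = ε (y * x)`, so bijectivity of `φ` makes
the bilinear form `(x, y) ↦ ε (x * y)` nondegenerate. Nondegeneracy yields, for each `a`, a unique
`σ a` with `ε (σ a * z) = ε (z * a)` for all `z` (the Nakayama automorphism), and uniqueness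
forces `σ` to be multiplicative. Then `φ (x * a) y = ε (y * x * a) = ε (σ a * y * x)
= φ x (σ a * y)`.
-/

namespace Module.Dual

variable {F A : Type*} [Field F] [Ring A] [Algebra F A]

def mulForm (ε : Module.Dual F A) : LinearMap.BilinForm F A :=
  (LinearMap.mul F A).compr₂ ε

@[simp]
lemma mulForm_apply (ε : Module.Dual F A) (x y : A) : ε.mulForm x y = ε (x * y) :=
  rfl

variable [FiniteDimensional F A] {ε : Module.Dual F A}

lemma eq_of_forall_apply_mul_eq (hε : ε.mulForm.Nondegenerate) {b c : A}
    (h : ∀ z, ε (b * z) = ε (c * z)) : b = c :=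
  (ε.mulForm.toDual hε).injective (LinearMap.ext h)

noncomputable def nakayamaLinearEquiv (hε : ε.mulForm.Nondegenerate) : A ≃ₗ[F] A :=
  (ε.mulForm.flip.toDual hε.flip).trans (ε.mulForm.toDual hε).symm

lemma apply_nakayamaLinearEquiv_mul (hε : ε.mulForm.Nondegenerate) (a z : A) :
    ε (nakayamaLinearEquiv hε a * z) = ε (z * a) :=
  ε.mulForm.apply_toDual_symm_apply (hB := hε) (ε.mulForm.flip a) z

lemma nakayamaLinearEquiv_one (hε : ε.mulForm.Nondegenerate) : nakayamaLinearEquiv hε 1 = 1 :=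
  eq_of_forall_apply_mul_eq hε fun z => by
    rw [apply_nakayamaLinearEquiv_mul, one_mul, mul_one]

lemma nakayamaLinearEquiv_mul (hε : ε.mulForm.Nondegenerate) (a b : A) :
    nakayamaLinearEquiv hε (a * b) = nakayamaLinearEquiv hε a * nakayamaLinearEquiv hε b :=
  eq_of_forall_apply_mul_eq hε fun z => by
    rw [apply_nakayamaLinearEquiv_mul, ← mul_assoc, ← apply_nakayamaLinearEquiv_mul hε b,
      ← mul_assoc, ← apply_nakayamaLinearEquiv_mul hε a, mul_assoc]

noncomputable def nakayamaAut (hε : ε.mulForm.Nondegenerate) : A ≃ₐ[F] A :=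
  .ofLinearEquiv (nakayamaLinearEquiv hε) (nakayamaLinearEquiv_one hε)
    (nakayamaLinearEquiv_mul hε)

lemma apply_nakayamaAut_mul (hε : ε.mulForm.Nondegenerate) (a z : A) :
    ε (nakayamaAut hε a * z) = ε (z * a) :=
  apply_nakayamaLinearEquiv_mul hε a z

end Module.Dual

/-- If `(A, φ)` is a Frobenius algebra (`φ : A ≅ A*` an isomorphism
of left `A`-modules, with `(a·f·b)(x) = f(b x a)` on the dual), then there is an
algebra automorphism `σ` of `A` such that `φ` is an isomorphism of
`(A,A)`-bimodules `A ≅ (A*)_σ`, i.e. `φ(x·a) = φ(x)·σ(a)` for all `x, a`. -/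
theorem stmt_2 (F A : Type) [Field F] [Ring A] [Algebra F A] [FiniteDimensional F A]
    (φ : A ≃ₗ[F] (A →ₗ[F] F))
    (hφ : ∀ a x y : A, φ (a * x) y = φ x (y * a)) :
    ∃ σ : A ≃ₐ[F] A, ∀ x a y : A, φ (x * a) y = φ x (σ a * y) := by
  set ε : Module.Dual F A := φ 1
  have hφε : ∀ x y, φ x y = ε (y * x) := fun x y => by simpa using hφ x 1 y
  have hε : ε.mulForm.Nondegenerate :=
    .ofSeparatingRight fun y hy => φ.map_eq_zero_iff.mp <| LinearMap.ext fun x => by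
      simpa [hφε] using hy x
  refine ⟨Module.Dual.nakayamaAut hε, fun x a y => ?_⟩
  rw [hφε (x * a), hφε x, ← mul_assoc, ← Module.Dual.apply_nakayamaAut_mul hε a,
    mul_assoc]
end

section
/- Let A be a finite-dimensional F-algebra whose left regular module decomposes as A ≅ ⊕_{i=1}^n P_i^{⊕d} with the P_i pairwise non-isomorphic indecomposable projectives, all occurring with the same multiplicity d. Then A is Frobenius (A ≅ A* as left A-modules) if and only if A is self-injective. -/
open Module

open Module

lemma aux_baer_field {F : Type} [Field F] : Module.Baer F F := by
  intro I g
  rcases Ideal.eq_bot_or_top I with h | h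
  · subst h
    refine ⟨0, fun x hx => ?_⟩
    have hx0 : x = 0 := by simpa using hx
    subst hx0
    have : (⟨0, hx⟩ : (⊥ : Ideal F)) = 0 := rfl
    rw [this]
    exact (map_zero g).symm

  · subst h
    refine ⟨g ⟨1, trivial⟩ • (LinearMap.id : F →ₗ[F] F), fun x hx => ?_⟩
    have : (⟨x, hx⟩ : (⊤ : Ideal F)) = x • (⟨1, trivial⟩ : (⊤ : Ideal F)) := by
      ext; simp
    rw [this, map_smul]
    simp [mul_comm]

lemma aux_exists_atom_le {A V : Type} [Ring A] [AddCommGroup V] [Module A V]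
    (hart : IsArtinian A V) (N : Submodule A V) (hN : N ≠ ⊥) :
    ∃ S : Submodule A V, IsAtom S ∧ S ≤ N := by
  obtain ⟨S, ⟨hSN, hS0⟩, hmin⟩ :=
    hart.wf.has_min {S : Submodule A V | S ≤ N ∧ S ≠ ⊥} ⟨N, le_rfl, hN⟩
  refine ⟨S, ⟨hS0, fun b hb => ?_⟩, hSN⟩
  by_contra hb0
  exact hmin b ⟨hb.le.trans hSN, hb0⟩ hb

lemma aux_orderIso_isAtom {α β : Type*} [PartialOrder α] [OrderBot α] [PartialOrder β]
    [OrderBot β] (f : α ≃o β) {a : α} (ha : IsAtom a) : IsAtom (f a) := by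
  constructor
  · intro h
    apply ha.1
    have : f.symm (f a) = f.symm ⊥ := by rw [h]
    simpa using this
  · intro b hb
    have h1 : f.symm b < a := by
      have := f.symm.strictMono hb
      simpa using this
    have h2 : f.symm b = ⊥ := ha.2 _ h1
    have : b = f (f.symm b) := by simp
    rw [this, h2]
    simp


set_option maxHeartbeats 2000000 in
/-- Let `A` be a finite-dimensional `F`-algebra whose left
regular module decomposes as `A ≅ ⊕_{i=1}^n P_i^{⊕d}` with the `P_i` pairwise
non-isomorphic indecomposable projectives, all occurring with the same
multiplicity `d > 0`.  Then `A` is Frobenius (there is a left-module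
isomorphism `A ≅ A* = Hom_F(A,F)`, with `(a·f)(x) = f(x a)`) if and only if
`A` is self-injective (the left regular module is injective). -/
theorem stmt_13 (F A : Type) [Field F] [Ring A] [Algebra F A] [FiniteDimensional F A]
    (n d : ℕ) (hd : 0 < d) (P : Fin n → Type)
    [∀ i, AddCommGroup (P i)] [∀ i, Module A (P i)]
    (hproj : ∀ i, Module.Projective A (P i))
    (hnontriv : ∀ i, Nontrivial (P i))
    (hindec : ∀ i, ¬∃ N N' : Submodule A (P i), IsCompl N N' ∧ N ≠ ⊥ ∧ N' ≠ ⊥)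
    (hnoniso : ∀ i j, i ≠ j → IsEmpty ((P i) ≃ₗ[A] (P j)))
    (hdecomp : Nonempty (A ≃ₗ[A] ((i : Fin n) → Fin d → P i))) :
    (∃ φ : A ≃ₗ[F] (A →ₗ[F] F), ∀ a x y : A, φ (a * x) y = φ x (y * a)) ↔
      Module.Injective A A := by
  constructor
  · rintro ⟨φ, hφ⟩
    constructor
    intro X Y _ _ _ _ f hf g
    letI : Module F X := Module.compHom X (algebraMap F A)
    letI : Module F Y := Module.compHom Y (algebraMap F A)
    haveI hTX : IsScalarTower F A X := ⟨fun c a x => by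
      show (c • a) • x = algebraMap F A c • (a • x)
      rw [Algebra.smul_def, mul_smul]⟩
    haveI hTY : IsScalarTower F A Y := ⟨fun c a y => by
      show (c • a) • y = algebraMap F A c • (a • y)
      rw [Algebra.smul_def, mul_smul]⟩
    set ghat : X →ₗ[F] F :=
      { toFun := fun x => φ (g x) 1
        map_add' := fun x y => by
          show φ (g (x + y)) 1 = φ (g x) 1 + φ (g y) 1
          rw [map_add, map_add, LinearMap.add_apply]
        map_smul' := fun c x => by
          show φ (g (c • x)) 1 = c • (φ (g x) 1)
          have h1 : g (c • x) = c • g x := map_smul (g.restrictScalars F) c x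
          rw [h1, map_smul, LinearMap.smul_apply] } with ghat_def
    obtain ⟨h0, hh0⟩ := aux_baer_field.extension_property (f.restrictScalars F) hf ghat
    set L : Y → (A →ₗ[F] F) := fun y =>
      { toFun := fun a => h0 (a • y)
        map_add' := fun a b => by
          show h0 ((a + b) • y) = h0 (a • y) + h0 (b • y)
          rw [add_smul, map_add]
        map_smul' := fun c a => by
          show h0 ((c • a) • y) = c • h0 (a • y)
          rw [smul_assoc, map_smul] } with L_def
    have hLsmul : ∀ (b : A) (y : Y), L (b • y) = φ (b * φ.symm (L y)) := by
      intro b y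
      ext a
      have h2 : (φ (b * φ.symm (L y))) a = (φ (φ.symm (L y))) (a * b) := hφ b _ a
      rw [h2, LinearEquiv.apply_symm_apply]
      show h0 (a • b • y) = h0 ((a * b) • y)
      rw [mul_smul]
    refine ⟨{ toFun := fun y => φ.symm (L y)
              map_add' := fun y z => by
                show φ.symm (L (y + z)) = φ.symm (L y) + φ.symm (L z)
                have h5 : L (y + z) = L y + L z := by
                  ext a
                  show h0 (a • (y + z)) = h0 (a • y) + h0 (a • z)
                  rw [smul_add, map_add]
                rw [h5, map_add]
              map_smul' := fun b y => by
                show φ.symm (L (b • y)) = b • φ.symm (L y)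
                rw [hLsmul, LinearEquiv.symm_apply_apply, smul_eq_mul] },
      fun x => ?_⟩
    show φ.symm (L (f x)) = g x
    have h6 : L (f x) = φ (g x) := by
      ext a
      show h0 (a • f x) = φ (g x) a
      have h3 : a • f x = f (a • x) := (map_smul f a x).symm
      rw [h3]
      have h4 : h0 (f (a • x)) = ghat (a • x) := LinearMap.ext_iff.mp hh0 (a • x)
      rw [h4]
      show φ (g (a • x)) 1 = φ (g x) a
      rw [map_smul g a x, smul_eq_mul, hφ a (g x) 1, one_mul]
    rw [h6, LinearEquiv.symm_apply_apply]

  · intro hinj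
    obtain ⟨e⟩ := hdecomp
    classical
    letI instF : ∀ i, Module F (P i) := fun i => Module.compHom (P i) (algebraMap F A)
    haveI instTow : ∀ i, IsScalarTower F A (P i) := fun i => ⟨fun c a x => by
      show (c • a) • x = algebraMap F A c • (a • x)
      rw [Algebra.smul_def, mul_smul]⟩
    set M := ((i : Fin n) → Fin d → P i) with M_def
    have k0 : Fin d := ⟨0, hd⟩
    set π : ∀ (i : Fin n) (_ : Fin d), M →ₗ[A] P i :=
      fun i k => (LinearMap.proj k).comp (LinearMap.proj (R := A) (φ := fun j => Fin d → P j) i)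
      with π_def
    set ι : ∀ (i : Fin n) (_ : Fin d), (P i) →ₗ[A] M :=
      fun i k => (LinearMap.single A (fun j => Fin d → P j) i).comp
        (LinearMap.single A (fun _ : Fin d => P i) k) with ι_def
    have hπι : ∀ i k (x : P i), π i k (ι i k x) = x := by
      intro i k x
      change (Pi.single i ((Pi.single k x : Fin d → P i)) : M) i k = x
      rw [Pi.single_eq_same, Pi.single_eq_same]
    have hπι_ne : ∀ i k k' (x : P i), k' ≠ k → π i k' (ι i k x) = 0 := by
      intro i k k' x hkk
      change (Pi.single i ((Pi.single k x : Fin d → P i)) : M) i k' = 0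
      rw [Pi.single_eq_same, Pi.single_eq_of_ne hkk]
    have hπι_ne' : ∀ i j k k' (x : P i), j ≠ i → π j k' (ι i k x) = 0 := by
      intro i j k k' x hji
      change (Pi.single i ((Pi.single k x : Fin d → P i)) : M) j k' = 0
      rw [Pi.single_eq_of_ne hji]
      rfl
    have hιinj : ∀ i k, Function.Injective (ι i k) := by
      intro i k x y h
      have := congrArg (π i k) h
      rwa [hπι, hπι] at this
    haveI instFD : ∀ i, FiniteDimensional F (P i) := by
      intro i
      refine FiniteDimensional.of_injective
        ((e.symm.toLinearMap.comp (ι i k0)).restrictScalars F) ?_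
      intro x y h
      exact hιinj i k0 (e.symm.injective h)
    -- extension property into each P i
    have extP : ∀ (i : Fin n) (X Y : Type) [AddCommGroup X] [AddCommGroup Y] [Module A X]
        [Module A Y] (f : X →ₗ[A] Y) (_ : Function.Injective f) (g : X →ₗ[A] P i),
        ∃ h : Y →ₗ[A] P i, ∀ x, h (f x) = g x := by
      intro i X Y _ _ _ _ f hf g
      obtain ⟨h', hh'⟩ := hinj.out f hf ((e.symm.toLinearMap.comp (ι i k0)).comp g)
      refine ⟨(π i k0).comp (e.toLinearMap.comp h'), fun x => ?_⟩
      have h1 := hh' x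
      show π i k0 (e (h' (f x))) = g x
      rw [h1]
      show π i k0 (e (e.symm (ι i k0 (g x)))) = g x
      rw [e.apply_symm_apply, hπι]
    haveI instArt : ∀ i, IsArtinian A (P i) := fun i => isArtinian_of_tower F inferInstance
    haveI instNoeth : ∀ i, IsNoetherian A (P i) := fun i => isNoetherian_of_tower F inferInstance
    -- each P i has a unique atom
    have uniqueAtom : ∀ i (S S' : Submodule A (P i)), IsAtom S → IsAtom S' → S = S' := by
      intro i S S' hS hS'
      by_contra hne
      have hdisj : S ⊓ S' = ⊥ := by
        rcases hS.le_iff.mp inf_le_left with h | h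
        · exact h
        · exfalso
          apply hne
          have hle : S ≤ S' := h ▸ inf_le_right
          rcases hS'.le_iff.mp hle with h2 | h2
          · exact absurd h2 hS.1
          · exact h2
      -- the projection map
      set f0 : (↥S × ↥S') →ₗ[A] P i :=
        S.subtype.comp (LinearMap.fst A ↥S ↥S') + S'.subtype.comp (LinearMap.snd A ↥S ↥S')
        with f0_def
      have hf0 : Function.Injective f0 := by
        rw [← LinearMap.ker_eq_bot]
        rw [Submodule.eq_bot_iff]
        rintro ⟨s, s'⟩ hmem
        have h1 : (s : P i) + (s' : P i) = 0 := hmem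
        have h2 : (s : P i) = -(s' : P i) := eq_neg_of_add_eq_zero_left h1
        have h3 : (s : P i) ∈ S ⊓ S' := by
          constructor
          · exact s.2
          · rw [h2]; exact neg_mem s'.2
        rw [hdisj] at h3
        have h4 : (s : P i) = 0 := h3
        have h5 : (s' : P i) = 0 := by
          have := h2.symm
          rw [h4] at this
          simpa using this.symm
        ext
        · exact h4
        · exact h5
      obtain ⟨ε, hε⟩ := extP i _ _ f0 hf0 (S.subtype.comp (LinearMap.fst A ↥S ↥S'))
      have hεS : ∀ s : ↥S, ε (s : P i) = s := by
        intro s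
        have := hε (s, 0)
        simpa [f0_def] using this
      have hεS' : ∀ s' : ↥S', ε (s' : P i) = 0 := by
        intro s'
        have := hε (0, s')
        simpa [f0_def] using this
      -- Fitting
      obtain ⟨m0, hm0⟩ := Filter.eventually_atTop.mp
        (LinearMap.eventually_isCompl_ker_pow_range_pow (ε : Module.End A (P i)))
      set m := m0 + 1 with m_def
      have hcompl := hm0 m (Nat.le_add_right _ _)
      have hker_or : LinearMap.ker (ε ^ m) = ⊥ ∨ LinearMap.range (ε ^ m) = ⊥ := by
        by_contra hcon
        push_neg at hcon
        exact hindec i ⟨_, _, hcompl, hcon.1, hcon.2⟩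
      rcases hker_or with hker | hrange
      · -- S' ≤ ker ε ≤ ker ε^m
        obtain ⟨s', hs'⟩ : ∃ s' : ↥S', (s' : P i) ≠ 0 := by
          have := hS'.1
          by_contra hcon
          push_neg at hcon
          apply this
          rw [Submodule.eq_bot_iff]
          intro x hx
          exact hcon ⟨x, hx⟩
        apply hs'
        have h1 : (ε ^ m) (s' : P i) = 0 := by
          rw [m_def, pow_succ]
          show (ε ^ m0) (ε (s' : P i)) = 0
          rw [hεS' s', map_zero]
        have h2 : (s' : P i) ∈ LinearMap.ker (ε ^ m) := h1
        rw [hker] at h2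
        exact h2
      · -- ε^m fixes S
        obtain ⟨s, hs⟩ : ∃ s : ↥S, (s : P i) ≠ 0 := by
          have := hS.1
          by_contra hcon
          push_neg at hcon
          apply this
          rw [Submodule.eq_bot_iff]
          intro x hx
          exact hcon ⟨x, hx⟩
        apply hs
        have h1 : ∀ m', (ε ^ m') (s : P i) = s := by
          intro m'
          induction m' with
          | zero => rfl
          | succ k ih =>
            rw [pow_succ]
            show (ε ^ k) (ε (s : P i)) = s
            rw [hεS s]
            exact ih
        have h2 : (s : P i) ∈ LinearMap.range (ε ^ m) := ⟨s, h1 m⟩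
        rw [hrange] at h2
        exact h2

    -- the unique atom T i of each P i
    have hTex : ∀ i, ∃ Ti : Submodule A (P i), IsAtom Ti := by
      intro i
      haveI := hnontriv i
      obtain ⟨S, hS, _⟩ := aux_exists_atom_le (instArt i) ⊤ bot_ne_top.symm
      exact ⟨S, hS⟩
    choose T hT using hTex
    haveI hsimpleT : ∀ i, IsSimpleModule A ↥(T i) := fun i => isSimpleModule_iff_isAtom.mpr (hT i)
    haveI hTnontriv : ∀ i, Nontrivial ↥(T i) := fun i => IsSimpleModule.nontrivial A ↥(T i)
    haveI hsmulcommP : ∀ i, SMulCommClass A F (P i) := fun i => ⟨fun a c y => by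
      show a • (algebraMap F A c) • y = (algebraMap F A c) • a • y
      rw [← mul_smul, ← mul_smul, Algebra.commutes]⟩
    haveI hsmulcommT : ∀ i, SMulCommClass A F ↥(T i) := fun i =>
      ⟨fun a c y => Subtype.ext (smul_comm a c (y : P i))⟩
    -- non-isomorphic socles
    have Tnoniso : ∀ i j, i ≠ j → (↥(T i) ≃ₗ[A] ↥(T j)) → False := by
      intro i j hij u
      obtain ⟨h, hh⟩ := extP j ↥(T i) (P i) (T i).subtype (Submodule.injective_subtype _)
        ((T j).subtype.comp u.toLinearMap)
      obtain ⟨h', hh'⟩ := extP i ↥(T j) (P j) (T j).subtype (Submodule.injective_subtype _)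
        ((T i).subtype.comp u.symm.toLinearMap)
      have hkerh : ∀ (jj ii : Fin n) (v : ↥(T jj) ≃ₗ[A] ↥(T ii)) (hm : P jj →ₗ[A] P ii),
          (∀ x : ↥(T jj), hm ((T jj).subtype x) = ((T ii).subtype.comp v.toLinearMap) x) →
          LinearMap.ker hm = ⊥ := by
        intro jj ii v hm hhm
        by_contra hne
        obtain ⟨S, hS, hSle⟩ := aux_exists_atom_le (instArt jj) _ hne
        have hST : S = T jj := uniqueAtom jj S (T jj) hS (hT jj)
        obtain ⟨t, ht⟩ := exists_ne (0 : ↥(T jj))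
        have hmem : ((t : P jj)) ∈ LinearMap.ker hm := by
          apply hSle
          rw [hST]
          exact t.2
        have h1 : hm ((T jj).subtype t) = 0 := hmem
        rw [hhm t] at h1
        have h2 : v t = 0 := by
          apply Subtype.ext
          exact h1
        apply ht
        apply v.injective
        rw [h2, map_zero]
      have hk1 : LinearMap.ker h = ⊥ := hkerh i j u h hh
      have hk2 : LinearMap.ker h' = ⊥ := hkerh j i u.symm h' hh'
      have hinj1 : Function.Injective h := LinearMap.ker_eq_bot.mp hk1
      have hinj2 : Function.Injective h' := LinearMap.ker_eq_bot.mp hk2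
      have hfr : finrank F (P i) = finrank F (P j) := by
        refine le_antisymm ?_ ?_
        · exact LinearMap.finrank_le_finrank_of_injective (f := h.restrictScalars F) hinj1
        · exact LinearMap.finrank_le_finrank_of_injective (f := h'.restrictScalars F) hinj2
      have hsurj : Function.Surjective h := by
        have := (LinearMap.injective_iff_surjective_of_finrank_eq_finrank
          (f := h.restrictScalars F) hfr).mp hinj1
        exact this
      exact (hnoniso i j hij).false (LinearEquiv.ofBijective h ⟨hinj1, hsurj⟩)
    -- finite dimensionality of T i and Hom spaces
    haveI instFDT : ∀ i, FiniteDimensional F ↥(T i) := fun i =>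
      FiniteDimensional.of_injective (((T i).subtype).restrictScalars F)
        (Submodule.injective_subtype _)
    haveI instFDHom : ∀ (i j : Fin n), FiniteDimensional F (P j →ₗ[A] ↥(T i)) := by
      intro i j
      refine FiniteDimensional.of_injective
        (⟨⟨fun (g : P j →ₗ[A] ↥(T i)) => (g.restrictScalars F : P j →ₗ[F] ↥(T i)),
          fun g g' => by ext x; rfl⟩, fun c g => by ext x; rfl⟩ :
          (P j →ₗ[A] ↥(T i)) →ₗ[F] (P j →ₗ[F] ↥(T i))) ?_
      intro g g' hgg
      exact LinearMap.restrictScalars_injective F hgg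
    haveI instFDEnd : ∀ i, FiniteDimensional F (Module.End A ↥(T i)) := by
      intro i
      refine FiniteDimensional.of_injective
        (⟨⟨fun (g : Module.End A ↥(T i)) => (g.restrictScalars F : ↥(T i) →ₗ[F] ↥(T i)),
          fun g g' => by ext x; rfl⟩, fun c g => by ext x; rfl⟩ :
          (Module.End A ↥(T i)) →ₗ[F] (↥(T i) →ₗ[F] ↥(T i))) ?_
      intro g g' hgg
      exact LinearMap.restrictScalars_injective F hgg
    -- decomposition identity
    have hxdecomp : ∀ x : M, x = ∑ j, ∑ k, ι j k (π j k x) := by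
      intro x
      have h1 : x = ∑ j, Pi.single j (x j) := (Finset.univ_sum_single x).symm
      conv_lhs => rw [h1]
      refine Finset.sum_congr rfl fun j _ => ?_
      have h3 : x j = ∑ k, (Pi.single k (x j k) : Fin d → P j) :=
        (Finset.univ_sum_single (x j)).symm
      calc (Pi.single j (x j) : M)
          = (LinearMap.single A (fun jj => Fin d → P jj) j) (x j) := rfl
        _ = (LinearMap.single A (fun jj => Fin d → P jj) j)
              (∑ k, (Pi.single k (x j k) : Fin d → P j)) := by rw [← h3]
        _ = ∑ k, (LinearMap.single A (fun jj => Fin d → P jj) j)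
              ((Pi.single k (x j k) : Fin d → P j)) := map_sum _ _ _
        _ = ∑ k, ι j k (π j k x) := rfl
    -- dimension inequality
    have dimineq : ∀ i, d * finrank F (Module.End A ↥(T i)) ≤ finrank F ↥(T i) := by
      intro i
      obtain ⟨t0, ht0⟩ := exists_ne (0 : ↥(T i))
      set G' : M →ₗ[A] ↥(T i) :=
        (LinearMap.toSpanSingleton A ↥(T i) t0).comp e.symm.toLinearMap with G'_def
      have hG'e1 : G' (e 1) = t0 := by
        show LinearMap.toSpanSingleton A ↥(T i) t0 (e.symm (e 1)) = t0
        rw [e.symm_apply_apply]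
        show (1 : A) • t0 = t0
        rw [one_smul]
      obtain ⟨j₀, k₁, hj₀⟩ : ∃ j k, G'.comp (ι j k) ≠ 0 := by
        by_contra hcon
        push_neg at hcon
        apply ht0
        rw [← hG'e1]
        rw [hxdecomp (e 1), map_sum]
        refine Finset.sum_eq_zero fun j _ => ?_
        rw [map_sum]
        refine Finset.sum_eq_zero fun k _ => ?_
        have := hcon j k
        calc G' (ι j k (π j k (e 1))) = (G'.comp (ι j k)) (π j k (e 1)) := rfl
          _ = (0 : P j →ₗ[A] ↥(T i)) (π j k (e 1)) := by rw [this]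
          _ = 0 := rfl
      set u : P j₀ →ₗ[A] ↥(T i) := G'.comp (ι j₀ k₁) with u_def
      have husurj : Function.Surjective u := by
        rcases eq_bot_or_eq_top (LinearMap.range u) with hbot | htop
        · exact absurd (LinearMap.range_eq_bot.mp hbot) hj₀
        · exact LinearMap.range_eq_top.mp htop
      have hΔle : finrank F (Module.End A ↥(T i)) ≤ finrank F (P j₀ →ₗ[A] ↥(T i)) := by
        refine LinearMap.finrank_le_finrank_of_injective
          (f := (⟨⟨fun (c : Module.End A ↥(T i)) => c.comp u,
            fun c c' => by ext x; rfl⟩, fun a c => by ext x; rfl⟩ :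
            (Module.End A ↥(T i)) →ₗ[F] (P j₀ →ₗ[A] ↥(T i)))) ?_
        intro c c' hcc
        ext y
        obtain ⟨x, hx⟩ := husurj y
        have := congrArg (fun (m : P j₀ →ₗ[A] ↥(T i)) => m x) hcc
        simpa [hx] using this
      set θ : (Fin d → (P j₀ →ₗ[A] ↥(T i))) →ₗ[F] ↥(T i) :=
        { toFun := fun f => ∑ k, f k (π j₀ k (e 1))
          map_add' := fun f g => by
            show (∑ k, (f k + g k) (π j₀ k (e 1))) = _
            rw [← Finset.sum_add_distrib]
            rfl
          map_smul' := fun c f => by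
            show (∑ k, (c • f k) (π j₀ k (e 1))) = c • ∑ k, f k (π j₀ k (e 1))
            rw [Finset.smul_sum]
            rfl } with θ_def
      have hθinj : Function.Injective θ := by
        have hzero : ∀ f, θ f = 0 → f = 0 := by
          intro f hf
          set g : M →ₗ[A] ↥(T i) := ∑ k, (f k).comp (π j₀ k) with g_def
          have hg1 : g (e 1) = 0 := by
            rw [g_def]
            rw [LinearMap.sum_apply]
            exact hf
          have hgzero : ∀ x : M, g x = 0 := by
            intro x
            have h3 : g x = g (e (e.symm x)) := by rw [e.apply_symm_apply]
            have h4 : (e.symm x : A) • ((1 : A)) = e.symm x := by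
              rw [smul_eq_mul, mul_one]
            have h5 : g (e (e.symm x)) = (e.symm x : A) • g (e 1) := by
              conv_lhs => rw [← h4]
              rw [map_smul, map_smul]
            rw [h3, h5, hg1, smul_zero]
          funext k
          ext v
          have h6 := hgzero (ι j₀ k v)
          rw [g_def, LinearMap.sum_apply] at h6
          have h7 : ∀ k', ((f k').comp (π j₀ k')) (ι j₀ k v) = if k' = k then f k v else 0 := by
            intro k'
            by_cases hkk : k' = k
            · subst hkk
              simp only [if_pos rfl]
              show f k' (π j₀ k' (ι j₀ k' v)) = f k' v
              rw [hπι]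
            · rw [if_neg hkk]
              show f k' (π j₀ k' (ι j₀ k v)) = 0
              rw [hπι_ne j₀ k k' v hkk, map_zero]
          rw [Finset.sum_congr rfl (fun k' _ => h7 k')] at h6
          rw [Finset.sum_ite_eq' Finset.univ k (fun _ => f k v)] at h6
          simpa using h6
        intro f g hfg
        have : θ (f - g) = 0 := by rw [map_sub, hfg, sub_self]
        have h8 := hzero _ this
        funext k
        have := congrFun h8 k
        rw [Pi.sub_apply] at this
        exact sub_eq_zero.mp (by simpa using this)
      have hle2 : finrank F (Fin d → (P j₀ →ₗ[A] ↥(T i))) ≤ finrank F ↥(T i) :=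
        LinearMap.finrank_le_finrank_of_injective (f := θ) hθinj
      have hpi : finrank F (Fin d → (P j₀ →ₗ[A] ↥(T i))) =
          d * finrank F (P j₀ →ₗ[A] ↥(T i)) := by
        rw [Module.finrank_pi_fintype]
        rw [Finset.sum_const, Finset.card_univ, Fintype.card_fin, smul_eq_mul]
      calc d * finrank F (Module.End A ↥(T i)) ≤ d * finrank F (P j₀ →ₗ[A] ↥(T i)) :=
            Nat.mul_le_mul_left d hΔle
        _ = finrank F (Fin d → (P j₀ →ₗ[A] ↥(T i))) := hpi.symm
        _ ≤ finrank F ↥(T i) := hle2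

    -- independent functionals on each T i
    have lamEx : ∀ i, ∃ lam : Fin d → (↥(T i) →ₗ[F] F),
        ∀ c : Fin d → Module.End A ↥(T i),
          (∑ k, (lam k).comp (((c k) : ↥(T i) →ₗ[A] ↥(T i)).restrictScalars F)) = 0 →
          ∀ k, c k = 0 := by
      intro i
      letI : DivisionRing (Module.End A ↥(T i)) := Module.End.instDivisionRing
      letI instDmod : Module (Module.End A ↥(T i))ᵐᵒᵖ (↥(T i) →ₗ[F] F) :=
        { smul := fun c μ => μ.comp (((MulOpposite.unop c) : ↥(T i) →ₗ[A] ↥(T i)).restrictScalars F)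
          one_smul := fun μ => by ext t; rfl
          mul_smul := fun c c' μ => by ext t; rfl
          smul_zero := fun c => by ext t; rfl
          smul_add := fun c μ ν => by ext t; rfl
          add_smul := fun c c' μ => by ext t; exact map_add μ _ _
          zero_smul := fun μ => by ext t; exact map_zero μ }
      haveI instTowD : IsScalarTower F (Module.End A ↥(T i))ᵐᵒᵖ (↥(T i) →ₗ[F] F) := by
        constructor
        intro a c μ
        ext t
        show μ ((a • (MulOpposite.unop c)) t) = a • μ ((MulOpposite.unop c) t)
        rw [LinearMap.smul_apply, map_smul]
      haveI hDfin : Module.Finite (Module.End A ↥(T i))ᵐᵒᵖ (↥(T i) →ₗ[F] F) :=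
        Module.Finite.of_restrictScalars_finite F _ _
      have h1 : finrank F (Module.End A ↥(T i))ᵐᵒᵖ *
          finrank (Module.End A ↥(T i))ᵐᵒᵖ (↥(T i) →ₗ[F] F) = finrank F (↥(T i) →ₗ[F] F) :=
        Module.finrank_mul_finrank F _ _
      have hop : finrank F (Module.End A ↥(T i))ᵐᵒᵖ = finrank F (Module.End A ↥(T i)) :=
        LinearEquiv.finrank_eq (MulOpposite.opLinearEquiv F).symm
      have hD : finrank F (↥(T i) →ₗ[F] F) = finrank F ↥(T i) := Subspace.dual_finrank_eq
      have hΔpos : 0 < finrank F (Module.End A ↥(T i)) := finrank_pos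
      have hd_le : d ≤ finrank (Module.End A ↥(T i))ᵐᵒᵖ (↥(T i) →ₗ[F] F) := by
        by_contra hlt
        push_neg at hlt
        have h2 := dimineq i
        rw [← hD, ← h1, hop] at h2
        have h3 : finrank F (Module.End A ↥(T i)) *
            finrank (Module.End A ↥(T i))ᵐᵒᵖ (↥(T i) →ₗ[F] F) <
            finrank F (Module.End A ↥(T i)) * d :=
          Nat.mul_lt_mul_of_le_of_lt (le_refl _) hlt hΔpos
        rw [Nat.mul_comm (finrank F (Module.End A ↥(T i))) d] at h3
        omega
      set b := Module.Free.chooseBasis (Module.End A ↥(T i))ᵐᵒᵖ (↥(T i) →ₗ[F] F) with b_def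
      have hcard : d ≤ Fintype.card
          (Module.Free.ChooseBasisIndex (Module.End A ↥(T i))ᵐᵒᵖ (↥(T i) →ₗ[F] F)) := by
        rw [← Module.finrank_eq_card_chooseBasisIndex]
        exact hd_le
      set emb : Fin d ↪ Module.Free.ChooseBasisIndex (Module.End A ↥(T i))ᵐᵒᵖ (↥(T i) →ₗ[F] F) :=
        (Fin.castLEEmb hcard).trans (Fintype.equivFin _).symm.toEmbedding with emb_def
      have hindep : LinearIndependent (Module.End A ↥(T i))ᵐᵒᵖ (⇑b ∘ ⇑emb) :=
        b.linearIndependent.comp emb emb.injective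
      refine ⟨fun k => b (emb k), ?_⟩
      intro c hsum k
      have h4 : ∑ k, MulOpposite.op (c k) • (b (emb k)) = 0 := hsum
      have h5 := linearIndependent_iff'.mp hindep Finset.univ (fun k => MulOpposite.op (c k)) h4
        k (Finset.mem_univ k)
      exact (MulOpposite.op_eq_zero_iff (c k)).mp h5

    -- extension of functionals from T i to P i
    have extFun : ∀ i (μ : ↥(T i) →ₗ[F] F), ∃ ν : P i →ₗ[F] F,
        ∀ t : ↥(T i), ν (t : P i) = μ t := by
      intro i μ
      obtain ⟨ν, hν⟩ := aux_baer_field.extension_property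
        (((T i).subtype).restrictScalars F) (Submodule.injective_subtype _) μ
      exact ⟨ν, fun t => LinearMap.ext_iff.mp hν t⟩
    choose lam hlam using lamEx
    choose ν hν using fun i k => extFun i (lam i k)
    set lamM : M →ₗ[F] F := ∑ i, ∑ k, (ν i k).comp ((π i k).restrictScalars F) with lamM_def
    set lam0 : A →ₗ[F] F := lamM.comp (e.toLinearMap.restrictScalars F) with lam0_def
    -- key property: lam0 nonzero on every atom of A
    have key : ∀ S : Submodule A A, IsAtom S → ∃ s ∈ S, lam0 s ≠ 0 := by
      intro S hS
      set S' : Submodule A M := Submodule.map e.toLinearMap S with S'_def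
      have hS' : IsAtom S' := by
        have h := aux_orderIso_isAtom (Submodule.orderIsoMapComap e) hS
        rwa [Submodule.orderIsoMapComap_apply] at h
      haveI : IsSimpleModule A ↥S' := isSimpleModule_iff_isAtom.mpr hS'
      set u : ∀ (i : Fin n) (_ : Fin d), ↥S' →ₗ[A] P i :=
        fun i k => (π i k).comp S'.subtype with u_def
      have hex : ∃ i k, u i k ≠ 0 := by
        by_contra hcon
        push_neg at hcon
        apply hS'.1
        rw [Submodule.eq_bot_iff]
        intro x hx
        have hco : ∀ i k, x i k = 0 := by
          intro i k
          exact LinearMap.ext_iff.mp (hcon i k) ⟨x, hx⟩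
        funext i k
        exact hco i k
      have hu : ∀ i k, u i k ≠ 0 →
          Function.Injective (u i k) ∧ LinearMap.range (u i k) = T i := by
        intro i k hu0
        have hinj' : Function.Injective (u i k) := by
          rcases eq_bot_or_eq_top (LinearMap.ker (u i k)) with hb | ht
          · exact LinearMap.ker_eq_bot.mp hb
          · exfalso
            apply hu0
            ext x
            have : x ∈ LinearMap.ker (u i k) := ht ▸ Submodule.mem_top
            exact this
        refine ⟨hinj', ?_⟩
        have hrs : IsSimpleModule A ↥(LinearMap.range (u i k)) :=
          IsSimpleModule.congr (LinearEquiv.ofInjective (u i k) hinj').symm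
        exact uniqueAtom i _ _ (isSimpleModule_iff_isAtom.mp hrs) (hT i)
      obtain ⟨i₀, k₀, hu0⟩ := hex
      have hblock : ∀ i k, i ≠ i₀ → u i k = 0 := by
        intro i k hne
        by_contra hu1
        obtain ⟨hinj1, hr1⟩ := hu i k hu1
        obtain ⟨hinj0, hr0⟩ := hu i₀ k₀ hu0
        have w1 : ↥S' ≃ₗ[A] ↥(T i) :=
          (LinearEquiv.ofInjective (u i k) hinj1).trans (LinearEquiv.ofEq _ _ hr1)
        have w0 : ↥S' ≃ₗ[A] ↥(T i₀) :=
          (LinearEquiv.ofInjective (u i₀ k₀) hinj0).trans (LinearEquiv.ofEq _ _ hr0)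
        exact Tnoniso i i₀ hne (w1.symm.trans w0)
      have humem : ∀ k (x : ↥S'), u i₀ k x ∈ T i₀ := by
        intro k x
        by_cases h : u i₀ k = 0
        · rw [h, LinearMap.zero_apply]
          exact (T i₀).zero_mem
        · obtain ⟨_, hr⟩ := hu i₀ k h
          rw [← hr]
          exact LinearMap.mem_range_self _ x
      set v : ∀ _ : Fin d, (↥S' →ₗ[A] ↥(T i₀)) :=
        fun k => (u i₀ k).codRestrict (T i₀) (humem k) with v_def
      obtain ⟨hinj0, hr0⟩ := hu i₀ k₀ hu0
      set w : ↥S' ≃ₗ[A] ↥(T i₀) :=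
        (LinearEquiv.ofInjective (u i₀ k₀) hinj0).trans (LinearEquiv.ofEq _ _ hr0) with w_def
      set c : ∀ _ : Fin d, Module.End A ↥(T i₀) :=
        fun k => (v k).comp w.symm.toLinearMap with c_def
      by_contra hcon
      push_neg at hcon
      have hallzero : ∀ s ∈ S, lam0 s = 0 := hcon
      have hzero : ∀ t : ↥(T i₀),
          (∑ k, (lam i₀ k).comp (((c k) : ↥(T i₀) →ₗ[A] ↥(T i₀)).restrictScalars F)) t = 0 := by
        intro t
        set x : ↥S' := w.symm t with x_def
        have hmemS : (e.symm ((x : M))) ∈ S := by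
          obtain ⟨a, haS, hax⟩ := x.2
          have : e.symm ((x : M)) = a := by
            rw [← hax]
            exact e.symm_apply_apply a
          rwa [this]
        have h0 : lam0 (e.symm ((x : M))) = 0 := hallzero _ hmemS
        have h1 : lam0 (e.symm ((x : M))) = lamM (x : M) := by
          show lamM (e (e.symm ((x : M)))) = lamM (x : M)
          rw [e.apply_symm_apply]
        have h2 : lamM ((x : M)) = ∑ i, ∑ k, ν i k (π i k ((x : M))) := by
          rw [lamM_def]
          rw [LinearMap.sum_apply]
          refine Finset.sum_congr rfl fun i _ => ?_
          rw [LinearMap.sum_apply]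
          exact Finset.sum_congr rfl fun k _ => rfl
        have h3 : ∀ i, i ≠ i₀ → ∀ k, ν i k (π i k ((x : M))) = 0 := by
          intro i hne k
          have hπx : π i k ((x : M)) = u i k x := rfl
          rw [hπx, hblock i k hne, LinearMap.zero_apply, map_zero]
        have h4 : ∀ k, ν i₀ k (π i₀ k ((x : M))) = lam i₀ k (c k t) := by
          intro k
          have hxk : π i₀ k ((x : M)) = ((v k x : ↥(T i₀)) : P i₀) := rfl
          rw [hxk, hν i₀ k (v k x)]
          have : v k x = c k t := rfl
          rw [this]
        have h5 : (∑ i, ∑ k, ν i k (π i k ((x : M)))) = ∑ k, lam i₀ k (c k t) := by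
          rw [Finset.sum_eq_single_of_mem i₀ (Finset.mem_univ i₀)
            (fun i _ hne => Finset.sum_eq_zero fun k _ => h3 i hne k)]
          exact Finset.sum_congr rfl fun k _ => h4 k
        have h6 : (∑ k, (lam i₀ k).comp
            (((c k) : ↥(T i₀) →ₗ[A] ↥(T i₀)).restrictScalars F)) t
            = ∑ k, lam i₀ k (c k t) := by
          rw [LinearMap.sum_apply]
          exact Finset.sum_congr rfl fun k _ => rfl
        rw [h6, ← h5, ← h2, ← h1, h0]
      have hc0 : ∀ k, c k = 0 := hlam i₀ c (by ext t; exact hzero t)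
      obtain ⟨t1, ht1⟩ := exists_ne (0 : ↥(T i₀))
      have h7 : c k₀ t1 = 0 := by rw [hc0 k₀]; rfl
      have h8 : ((c k₀ t1 : ↥(T i₀)) : P i₀) = u i₀ k₀ (w.symm t1) := rfl
      have h9 : u i₀ k₀ (w.symm t1) = 0 := by
        rw [← h8, h7]
        rfl
      have h10 : w.symm t1 = 0 := hinj0 (by rw [h9, map_zero])
      apply ht1
      have h11 := congrArg w h10
      rw [LinearEquiv.apply_symm_apply, map_zero] at h11
      exact h11
    -- final assembly
    set Φ : A →ₗ[F] (A →ₗ[F] F) :=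
      { toFun := fun x =>
          { toFun := fun y => lam0 (y * x)
            map_add' := fun y z => by
              show lam0 ((y + z) * x) = lam0 (y * x) + lam0 (z * x)
              rw [add_mul, map_add]
            map_smul' := fun cc y => by
              show lam0 ((cc • y) * x) = cc • lam0 (y * x)
              rw [smul_mul_assoc, map_smul] }
        map_add' := fun x x' => by
          ext y
          show lam0 (y * (x + x')) = lam0 (y * x) + lam0 (y * x')
          rw [mul_add, map_add]
        map_smul' := fun cc x => by
          ext y
          show lam0 (y * (cc • x)) = cc • lam0 (y * x)
          rw [mul_smul_comm, map_smul] } with Φ_def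
    have hΦinj : Function.Injective Φ := by
      suffices h : ∀ x, Φ x = 0 → x = 0 by
        intro x y hxy
        have := h (x - y) (by rw [map_sub, hxy, sub_self])
        exact sub_eq_zero.mp this
      intro x hx
      by_contra hx0
      have hspan : Submodule.span A {x} ≠ ⊥ := by
        intro h
        exact hx0 (Submodule.span_singleton_eq_bot.mp h)
      haveI : IsArtinian A A := isArtinian_of_tower F inferInstance
      obtain ⟨S, hS, hSle⟩ := aux_exists_atom_le inferInstance _ hspan
      obtain ⟨s, hsS, hs0⟩ := key S hS
      obtain ⟨a, ha⟩ := Submodule.mem_span_singleton.mp (hSle hsS)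
      apply hs0
      have h1 : lam0 s = lam0 (a * x) := by rw [← ha]; rfl
      have h2 : Φ x a = lam0 (a * x) := rfl
      have h3 : Φ x a = 0 := by rw [hx]; rfl
      rw [h1, ← h2, h3]
    have hfr : finrank F A = finrank F (A →ₗ[F] F) := Subspace.dual_finrank_eq.symm
    refine ⟨Φ.linearEquivOfInjective hΦinj hfr, ?_⟩
    intro a x y
    rw [LinearMap.linearEquivOfInjective_apply, LinearMap.linearEquivOfInjective_apply]
    show lam0 (y * (a * x)) = lam0 ((y * a) * x)
    rw [mul_assoc]
end
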